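/- Let ū be an H-valued random variable with mean u, ‖u‖ ≤ L, E[‖ū − u‖²] ≤ σ²/m, and let ũ = min{λ/‖ū‖, 1}·ū with λ > L. Then the variance of the clipped estimator satisfies E[‖ũ − E[ũ]‖²] ≤ (σ²/m)·[1 + ((λ+L)/(λ−L))²]. -/

import Mathlib

/-!
Clipping at level `λ` multiplies the distance to a point `u` with `‖u‖ ≤ L < λ` by at most
`(λ + L) / (λ - L)`: if `‖x‖ ≤ λ` nothing moves, and otherwise `‖clip x - u‖ ≤ λ + L` while
`‖x - u‖ ≥ λ - L`. Hence the mean squared error of the clipped estimator about `u` is at most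
`((λ + L) / (λ - L))²` times that of `ū`, and the variance is the mean squared error about the
mean, which is the smallest mean squared error about any point.
-/

open MeasureTheory

section Clip

variable {E : Type*} [NormedAddCommGroup E] [NormedSpace ℝ E]

noncomputable def clip (lam : ℝ) (x : E) : E := min (lam / ‖x‖) 1 • x

theorem clip_of_norm_le {lam : ℝ} {x : E} (hx : ‖x‖ ≤ lam) : clip lam x = x := by
  rcases eq_or_ne x 0 with rfl | hx0
  · simp [clip]
  · have : 1 ≤ lam / ‖x‖ := (one_le_div (norm_pos_iff.mpr hx0)).mpr hx
    simp [clip, min_eq_right this]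

theorem norm_clip_le {lam : ℝ} (hlam : 0 ≤ lam) (x : E) : ‖clip lam x‖ ≤ lam := by
  rcases eq_or_ne x 0 with rfl | hx0
  · simpa [clip] using hlam
  have hx : 0 < ‖x‖ := norm_pos_iff.mpr hx0
  rw [clip, norm_smul, Real.norm_of_nonneg (by positivity)]
  calc min (lam / ‖x‖) 1 * ‖x‖ ≤ lam / ‖x‖ * ‖x‖ := by gcongr; exact min_le_left _ _
    _ = lam := div_mul_cancel₀ _ hx.ne'

theorem norm_clip_sub_le {lam L : ℝ} {u : E} (hu : ‖u‖ ≤ L) (hL : L < lam) (x : E) :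
    ‖clip lam x - u‖ ≤ (lam + L) / (lam - L) * ‖x - u‖ := by
  have hgap : 0 < lam - L := sub_pos.mpr hL
  have hL0 : 0 ≤ L := (norm_nonneg u).trans hu
  by_cases hx : ‖x‖ ≤ lam
  · rw [clip_of_norm_le hx]
    have : 1 ≤ (lam + L) / (lam - L) := (one_le_div hgap).mpr (by linarith)
    exact le_mul_of_one_le_left (norm_nonneg _) this
  · calc ‖clip lam x - u‖ ≤ lam + L :=
          (norm_sub_le _ _).trans (add_le_add (norm_clip_le (by linarith) x) hu)
      _ = (lam + L) / (lam - L) * (lam - L) := (div_mul_cancel₀ _ hgap.ne').symm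
      _ ≤ (lam + L) / (lam - L) * ‖x - u‖ :=
          mul_le_mul_of_nonneg_left (by linarith [norm_sub_norm_le x u])
            (div_nonneg (by linarith) hgap.le)

end Clip

section Variance

variable {E : Type*} [NormedAddCommGroup E] [InnerProductSpace ℝ E] [CompleteSpace E]
  {Ω : Type*} [MeasurableSpace Ω] {μ : Measure Ω} [IsProbabilityMeasure μ]

theorem integral_norm_sub_integral_sq {Y : Ω → E} (hY : Integrable Y μ)
    (hY2 : Integrable (fun ω => ‖Y ω‖ ^ 2) μ) :
    ∫ ω, ‖Y ω - ∫ ω', Y ω' ∂μ‖ ^ 2 ∂μ = ∫ ω, ‖Y ω‖ ^ 2 ∂μ - ‖∫ ω, Y ω ∂μ‖ ^ 2 := by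
  set m := ∫ ω, Y ω ∂μ
  have hinner : Integrable (fun ω => inner ℝ m (Y ω)) μ := by
    simpa only [real_inner_comm] using hY.inner_const m
  have hA : Integrable (fun ω => ‖Y ω‖ ^ 2 - 2 * inner ℝ m (Y ω)) μ :=
    hY2.sub (hinner.const_mul 2)
  calc ∫ ω, ‖Y ω - m‖ ^ 2 ∂μ
      = ∫ ω, (‖Y ω‖ ^ 2 - 2 * inner ℝ m (Y ω) + ‖m‖ ^ 2) ∂μ := by
        congr 1; ext ω; rw [norm_sub_sq_real, real_inner_comm]
    _ = ∫ ω, ‖Y ω‖ ^ 2 ∂μ - 2 * ‖m‖ ^ 2 + ‖m‖ ^ 2 := by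
        rw [integral_add hA (integrable_const _),
          integral_sub hY2 (hinner.const_mul 2), integral_const_mul, integral_inner hY]
        simp [m]
    _ = ∫ ω, ‖Y ω‖ ^ 2 ∂μ - ‖m‖ ^ 2 := by ring

theorem integral_norm_sub_integral_sq_le {X : Ω → E} (hX : Integrable X μ) (a : E)
    (hXa : Integrable (fun ω => ‖X ω - a‖ ^ 2) μ) :
    ∫ ω, ‖X ω - ∫ ω', X ω' ∂μ‖ ^ 2 ∂μ ≤ ∫ ω, ‖X ω - a‖ ^ 2 ∂μ := by
  have hXa' : Integrable (fun ω => X ω - a) μ := hX.sub (integrable_const a)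
  have hshift : ∀ ω, X ω - ∫ ω', X ω' ∂μ = (X ω - a) - ∫ ω', (X ω' - a) ∂μ := fun ω => by
    rw [integral_sub hX (integrable_const a), integral_const]
    simp
  simp only [hshift, integral_norm_sub_integral_sq hXa' hXa]
  linarith [sq_nonneg ‖∫ ω, (X ω - a) ∂μ‖]

end Variance

theorem clipped_variance_general
    {H : Type*} [NormedAddCommGroup H] [InnerProductSpace ℝ H] [CompleteSpace H]
    {Ω : Type*} [MeasurableSpace Ω] (μ : Measure Ω) [IsProbabilityMeasure μ]
    (ubar : Ω → H) (u : H) (L σ m lam : ℝ)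
    (hlam : L < lam)
    (huL : ‖u‖ ≤ L)
    (hintclip : Integrable (fun ω => (min (lam / ‖ubar ω‖) 1) • ubar ω) μ)
    (hint2 : Integrable (fun ω => ‖ubar ω - u‖ ^ 2) μ)
    (hvar : ∫ ω, ‖ubar ω - u‖ ^ 2 ∂μ ≤ σ ^ 2 / m) :
    ∫ ω, ‖(min (lam / ‖ubar ω‖) 1) • ubar ω
        - ∫ ω', (min (lam / ‖ubar ω'‖) 1) • ubar ω' ∂μ‖ ^ 2 ∂μ
      ≤ σ ^ 2 / m * (1 + ((lam + L) / (lam - L)) ^ 2) := by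
  change ∫ ω, ‖clip lam (ubar ω) - ∫ ω', clip lam (ubar ω') ∂μ‖ ^ 2 ∂μ ≤ _
  set c := (lam + L) / (lam - L)
  have hpt : ∀ ω, ‖clip lam (ubar ω) - u‖ ^ 2 ≤ c ^ 2 * ‖ubar ω - u‖ ^ 2 := fun ω => by
    rw [← mul_pow]
    exact pow_le_pow_left₀ (norm_nonneg _) (norm_clip_sub_le huL hlam _) 2
  have hint : Integrable (fun ω => ‖clip lam (ubar ω) - u‖ ^ 2) μ :=
    (hint2.const_mul _).mono' ((hintclip.sub (integrable_const u)).aestronglyMeasurable.norm.pow 2)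
      (ae_of_all _ fun ω => by simpa using hpt ω)
  have hvar0 : 0 ≤ σ ^ 2 / m := (integral_nonneg fun ω => by positivity).trans hvar
  calc _ ≤ ∫ ω, ‖clip lam (ubar ω) - u‖ ^ 2 ∂μ := integral_norm_sub_integral_sq_le hintclip u hint
    _ ≤ ∫ ω, c ^ 2 * ‖ubar ω - u‖ ^ 2 ∂μ := integral_mono hint (hint2.const_mul _) hpt
    _ = c ^ 2 * ∫ ω, ‖ubar ω - u‖ ^ 2 ∂μ := integral_const_mul _ _
    _ ≤ σ ^ 2 / m * (1 + c ^ 2) := by nlinarith [sq_nonneg c]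

theorem clipped_variance
    {H : Type*} [NormedAddCommGroup H] [InnerProductSpace ℝ H] [CompleteSpace H]
    {Ω : Type*} [MeasurableSpace Ω] (μ : Measure Ω) [IsProbabilityMeasure μ]
    (ubar : Ω → H) (u : H) (L σ m lam : ℝ)
    (hL : 0 ≤ L) (hσ : 0 < σ) (hm : 0 < m) (hlam : L < lam)
    (huL : ‖u‖ ≤ L)
    (hintu : Integrable ubar μ)
    (hmean : ∫ ω, ubar ω ∂μ = u)
    (hintclip : Integrable (fun ω => (min (lam / ‖ubar ω‖) 1) • ubar ω) μ)
    (hintvar : Integrable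
      (fun ω => ‖(min (lam / ‖ubar ω‖) 1) • ubar ω
        - ∫ ω', (min (lam / ‖ubar ω'‖) 1) • ubar ω' ∂μ‖ ^ 2) μ)
    (hint2 : Integrable (fun ω => ‖ubar ω - u‖ ^ 2) μ)
    (hvar : ∫ ω, ‖ubar ω - u‖ ^ 2 ∂μ ≤ σ ^ 2 / m) :
    ∫ ω, ‖(min (lam / ‖ubar ω‖) 1) • ubar ω
        - ∫ ω', (min (lam / ‖ubar ω'‖) 1) • ubar ω' ∂μ‖ ^ 2 ∂μ
      ≤ σ ^ 2 / m * (1 + ((lam + L) / (lam - L)) ^ 2) :=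
  clipped_variance_general μ ubar u L σ m lam hlam huL hintclip hint2 hvar
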